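/- The mean μ = E[X] of the GLL distribution satisfies μ = (θ/(1+θ))^(2+p)·(1+p+λ(1+θ))/(1+p+λθ), and for fixed θ > 0 and p ≥ 0, as λ → ∞, μ converges to (θ/(1+θ))^(1+p). -/

import Mathlib

/-!
The substitution `x = exp (-t)` turns `∫₀¹ (-log x) ^ (a - 1) * x ^ (r - 1) dx` into the Gamma
integral `Γ(a) / r ^ a`. Splitting the factor `λ - log x` of the density writes `x * f(x)` as a
combination of two such integrands, with `r = 1 + θ` and `a = p + 1`, `p + 2`; the recursion
`Γ(p + 2) = (p + 1) Γ(p + 1)` then gives the mean, a ratio of two affine functions of `λ` whose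
limit is the ratio of their slopes.
-/

open Real MeasureTheory Filter

/-- The generalized Log-Lindley (GLL) density. -/
noncomputable def gll (θ lam p x : ℝ) : ℝ :=
  θ ^ (2 + p) / (Real.Gamma (1 + p) * (1 + p + lam * θ)) *
    (-Real.log x) ^ p * (lam - Real.log x) * x ^ (θ - 1)

open Set Topology

lemma image_exp_neg_Ioi : (fun t : ℝ => exp (-t)) '' Ioi 0 = Ioo 0 1 := by
  ext y
  constructor
  · rintro ⟨t, ht, rfl⟩
    exact ⟨exp_pos _, exp_lt_one_iff.2 (neg_lt_zero.2 ht)⟩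
  · rintro ⟨hy0, hy1⟩
    exact ⟨-log y, neg_pos.2 (log_neg hy0 hy1), by simp [exp_log hy0]⟩

/-- The substitution `x = exp (-t)`. -/
lemma setIntegral_Ioo_zero_one_eq_Ioi {E : Type*} [NormedAddCommGroup E] [NormedSpace ℝ E]
    (g : ℝ → E) : ∫ x in Ioo 0 1, g x = ∫ t in Ioi 0, exp (-t) • g (exp (-t)) := by
  have hderiv : ∀ t ∈ Ioi (0 : ℝ),
      HasDerivWithinAt (fun t => exp (-t)) (-exp (-t)) (Ioi 0) t := fun t _ => by
    simpa using ((hasDerivAt_neg t).exp).hasDerivWithinAt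
  have hinj : InjOn (fun t : ℝ => exp (-t)) (Ioi 0) := fun a _ b _ h =>
    neg_injective (exp_injective h)
  rw [← image_exp_neg_Ioi,
    integral_image_eq_integral_abs_deriv_smul measurableSet_Ioi hderiv hinj]
  simp only [abs_neg, abs_of_pos (exp_pos _)]

lemma integral_neg_log_rpow_mul_rpow {a r : ℝ} (ha : 0 < a) (hr : 0 < r) :
    ∫ x in Ioo 0 1, (-log x) ^ (a - 1) * x ^ (r - 1) = (1 / r) ^ a * Gamma a := by
  rw [setIntegral_Ioo_zero_one_eq_Ioi, ← integral_rpow_mul_exp_neg_mul_Ioi ha hr]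
  refine setIntegral_congr_fun measurableSet_Ioi fun t _ => ?_
  rw [smul_eq_mul, log_exp, neg_neg, ← exp_mul, mul_left_comm, ← exp_add]
  ring_nf

lemma integrableOn_neg_log_rpow_mul_rpow {a r : ℝ} (ha : 0 < a) (hr : 0 < r) :
    IntegrableOn (fun x => (-log x) ^ (a - 1) * x ^ (r - 1)) (Ioo 0 1) :=
  .of_integral_ne_zero <| by
    rw [integral_neg_log_rpow_mul_rpow ha hr]
    exact (mul_pos (rpow_pos_of_pos (by positivity) _) (Gamma_pos_of_pos ha)).ne'

/-- The exponents are written as `a - 1` to match `integral_neg_log_rpow_mul_rpow`. -/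
lemma mul_gll_eq (θ lam p : ℝ) {x : ℝ} (hx : x ∈ Ioo 0 1) :
    x * gll θ lam p x = θ ^ (2 + p) / (Gamma (1 + p) * (1 + p + lam * θ)) *
      (lam * ((-log x) ^ ((p + 1) - 1) * x ^ ((1 + θ) - 1)) +
        (-log x) ^ ((p + 2) - 1) * x ^ ((1 + θ) - 1)) := by
  have hlog : 0 < -log x := neg_pos.2 (log_neg hx.1 hx.2)
  rw [gll, show (p + 2) - 1 = p + 1 by ring, rpow_add_one hlog.ne', add_sub_cancel_right,
    show (1 + θ) - 1 = (θ - 1) + 1 by ring, rpow_add_one hx.1.ne']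
  ring

lemma integral_mul_gll {θ p : ℝ} (hθ : 0 ≤ θ) (hp : -1 < p) (lam : ℝ) :
    ∫ x in Ioo 0 1, x * gll θ lam p x =
      (θ / (1 + θ)) ^ (2 + p) * (1 + p + lam * (1 + θ)) / (1 + p + lam * θ) := by
  have hθ' : 0 < 1 + θ := by linarith
  have hp1 : 0 < p + 1 := by linarith
  have hu : (1 / (1 + θ)) ^ (p + 2) = (1 / (1 + θ)) ^ (p + 1) * (1 / (1 + θ)) := by
    rw [← rpow_add_one (by positivity)]; ring_nf
  have hΓ : Gamma (p + 2) = (p + 1) * Gamma (1 + p) := by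
    rw [show p + 2 = (p + 1) + 1 by ring, Gamma_add_one hp1.ne', add_comm p]
  have hθu :
      (θ / (1 + θ)) ^ (2 + p) = θ ^ (2 + p) * ((1 / (1 + θ)) ^ (p + 1) * (1 / (1 + θ))) := by
    rw [← hu, add_comm p, ← mul_rpow hθ (by positivity), mul_one_div]
  rw [setIntegral_congr_fun measurableSet_Ioo fun x hx => mul_gll_eq θ lam p hx,
    integral_const_mul, integral_add ((integrableOn_neg_log_rpow_mul_rpow hp1 hθ').const_mul lam)
      (integrableOn_neg_log_rpow_mul_rpow (by linarith) hθ'), integral_const_mul,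
    integral_neg_log_rpow_mul_rpow hp1 hθ', integral_neg_log_rpow_mul_rpow (by linarith) hθ',
    hu, hΓ, hθu, add_comm p 1]
  have hG : Gamma (1 + p) ≠ 0 := (Gamma_pos_of_pos (by linarith)).ne'
  field_simp
  ring

lemma tendsto_add_mul_div_add_mul_atTop (a b c d : ℝ) (hd : d ≠ 0) :
    Tendsto (fun x => (a + x * b) / (c + x * d)) atTop (𝓝 (b / d)) := by
  have hlim (e f : ℝ) : Tendsto (fun x => e / x + f) atTop (𝓝 f) := by
    simpa using (tendsto_const_nhds.div_atTop tendsto_id).add (tendsto_const_nhds (x := f))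
  refine ((hlim a b).div (hlim c d) hd).congr' ?_
  filter_upwards [eventually_ne_atTop 0] with x hx
  rw [Pi.div_apply, div_add' _ _ _ hx, div_add' _ _ _ hx, div_div_div_cancel_right₀ hx,
    mul_comm b, mul_comm d]

theorem gll_mean_and_limit (θ p : ℝ) (hθ : 0 < θ) (hp : 0 ≤ p) :
    (∀ lam : ℝ, 0 ≤ lam →
      ∫ x in Set.Ioo (0:ℝ) 1, x * gll θ lam p x =
        (θ / (1 + θ)) ^ (2 + p) * (1 + p + lam * (1 + θ)) / (1 + p + lam * θ)) ∧
    Tendsto (fun lam => ∫ x in Set.Ioo (0:ℝ) 1, x * gll θ lam p x) atTop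
      (nhds ((θ / (1 + θ)) ^ (1 + p))) := by
  have hmean (lam : ℝ) := integral_mul_gll hθ.le (by linarith : -1 < p) lam
  refine ⟨fun lam _ => hmean lam, ?_⟩
  have hlim : (θ / (1 + θ)) ^ (2 + p) * ((1 + θ) / θ) = (θ / (1 + θ)) ^ (1 + p) := by
    rw [show 2 + p = (1 + p) + 1 by ring, rpow_add_one (by positivity)]
    field_simp
  simp_rw [hmean, mul_div_assoc, ← hlim]
  exact (tendsto_add_mul_div_add_mul_atTop _ _ _ _ hθ.ne').const_mul _
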